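/- arXiv:2009.11917 — 5 statements merged into one kernel-verified Lean document; each statement's English description precedes it below -/
import Mathlib

section
/- Consider the star automaton stationary distribution: under state ω, for branch ω′ of length λ with ratios r_{ω′} := δF^ω(S^{ω′})/Σ_{ω″≠ω′}F^ω(S^{ω″}) satisfying r_ω > r_{ω′} ≥ c > 1 for all ω′ ≠ ω (N and the r's fixed), the total stationary probability of branch ω, Σ_{k=1}^λ μ^ω_{ωk}, converges to 1 as λ → ∞. -/
open Filter

theorem stmt5 (N : ℕ) (hN : 0 < N) (r : Fin N → ℝ) (c : ℝ) (hc : 1 < c)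
    (ω : Fin N) (hrω : 1 < r ω)
    (hr : ∀ ω' : Fin N, ω' ≠ ω → c ≤ r ω' ∧ r ω' < r ω)
    (μ : ℕ → Fin N → ℕ → ℝ) (μ0 : ℕ → ℝ)
    (hpos : ∀ lam (ω' : Fin N) k, 0 < μ lam ω' k)
    (hgeo : ∀ lam, 1 ≤ lam → ∀ ω' : Fin N, ∀ k ∈ Finset.Icc 1 lam,
      μ lam ω' k = μ lam ω' lam * (1 / r ω') ^ (lam - k))
    (h0 : ∀ lam, 1 ≤ lam → ∀ ω' : Fin N,
      μ0 lam = μ lam ω' lam * (1 / r ω') ^ lam)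
    (hnorm : ∀ lam, 1 ≤ lam →
      (∑ ω' : Fin N, ∑ k ∈ Finset.Icc 1 lam, μ lam ω' k) + μ0 lam = 1) :
    Tendsto (fun lam : ℕ => ∑ k ∈ Finset.Icc 1 lam, μ lam ω k)
      atTop (nhds 1) := by
  set S : ℕ → Fin N → ℝ := fun lam ω' => ∑ k ∈ Finset.Icc 1 lam, μ lam ω' k with hS
  have hr1 : ∀ ω', 1 < r ω' := by
    intro ω'
    by_cases h : ω' = ω
    · subst h; exact hrω
    · exact lt_of_lt_of_le hc (hr ω' h).1
  have hrpos : ∀ ω', (0:ℝ) < r ω' := fun ω' => lt_trans one_pos (hr1 ω')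
  have hμ0pos : ∀ lam, 1 ≤ lam → 0 < μ0 lam := by
    intro lam h
    rw [h0 lam h ω]
    have := hpos lam ω lam
    have := hrpos ω
    positivity
  -- closed form: μ lam ω' k = μ0 lam * r ω' ^ k
  have key : ∀ lam, 1 ≤ lam → ∀ ω' : Fin N, ∀ k ∈ Finset.Icc 1 lam,
      μ lam ω' k = μ0 lam * r ω' ^ k := by
    intro lam hlam ω' k hk
    obtain ⟨hk1, hk2⟩ := Finset.mem_Icc.mp hk
    have hrne : r ω' ≠ 0 := (hrpos ω').ne'
    rw [hgeo lam hlam ω' k hk, h0 lam hlam ω', one_div, inv_pow, inv_pow, mul_assoc]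
    congr 1
    have hsplit : r ω' ^ lam = r ω' ^ (lam - k) * r ω' ^ k := by
      rw [← pow_add]; congr 1; omega
    rw [hsplit, mul_inv, mul_assoc, inv_mul_cancel₀ (pow_ne_zero _ hrne), mul_one]
  -- μ0 lam * r ω ^ lam ≤ S lam ω
  have hSω_ge : ∀ lam, 1 ≤ lam → μ0 lam * r ω ^ lam ≤ S lam ω := by
    intro lam hlam
    have hmem : lam ∈ Finset.Icc 1 lam := Finset.mem_Icc.mpr ⟨hlam, le_rfl⟩
    have h : μ lam ω lam ≤ S lam ω :=
      Finset.single_le_sum (fun k _ => (hpos lam ω k).le) hmem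
    rwa [key lam hlam ω lam hmem] at h
  have hSnonneg : ∀ lam ω', 0 ≤ S lam ω' :=
    fun lam ω' => Finset.sum_nonneg (fun k _ => (hpos lam ω' k).le)
  -- S lam ω ≤ 1
  have hSle1 : ∀ lam, 1 ≤ lam → S lam ω ≤ 1 := by
    intro lam hlam
    have h1 : S lam ω ≤ ∑ ω' : Fin N, S lam ω' :=
      Finset.single_le_sum (f := fun ω' => S lam ω')
        (fun ω' _ => hSnonneg lam ω') (Finset.mem_univ ω)
    have h2 := hnorm lam hlam
    have := hμ0pos lam hlam
    linarith
  -- the error bound function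
  set g : ℕ → ℝ := fun lam =>
    (∑ ω' ∈ Finset.univ.erase ω, (lam : ℝ) * (r ω' / r ω) ^ lam)
      + (1 / r ω) ^ lam with hg
  have hbound : ∀ lam, 1 ≤ lam → 1 - S lam ω ≤ g lam := by
    intro lam hlam
    have hns := hnorm lam hlam
    have hsplit : ∑ ω' : Fin N, S lam ω'
        = S lam ω + ∑ ω' ∈ Finset.univ.erase ω, S lam ω' := by
      rw [← Finset.add_sum_erase _ _ (Finset.mem_univ ω)]
    have heq : 1 - S lam ω = (∑ ω' ∈ Finset.univ.erase ω, S lam ω') + μ0 lam := by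
      have : (∑ ω' : Fin N, S lam ω') + μ0 lam = 1 := hns
      rw [hsplit] at this
      linarith
    rw [heq, hg]
    have hkey : μ0 lam * r ω ^ lam ≤ 1 := le_trans (hSω_ge lam hlam) (hSle1 lam hlam)
    apply add_le_add
    · apply Finset.sum_le_sum
      intro ω' hω'
      -- S lam ω' ≤ lam * (r ω'/r ω)^lam
      have h1 : S lam ω' ≤ (lam : ℝ) * (μ0 lam * r ω' ^ lam) := by
        have : S lam ω' = ∑ k ∈ Finset.Icc 1 lam, μ0 lam * r ω' ^ k :=
          Finset.sum_congr rfl (fun k hk => key lam hlam ω' k hk)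
        rw [this]
        calc ∑ k ∈ Finset.Icc 1 lam, μ0 lam * r ω' ^ k
            ≤ ∑ _k ∈ Finset.Icc 1 lam, μ0 lam * r ω' ^ lam := by
              apply Finset.sum_le_sum
              intro k hk
              have hk2 := (Finset.mem_Icc.mp hk).2
              exact mul_le_mul_of_nonneg_left
                (pow_le_pow_right₀ (le_of_lt (hr1 ω')) hk2) (hμ0pos lam hlam).le
          _ = (lam : ℝ) * (μ0 lam * r ω' ^ lam) := by
              rw [Finset.sum_const, Nat.card_Icc]
              simp
      have h2 : μ0 lam * r ω' ^ lam ≤ (r ω' / r ω) ^ lam := by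
        have : μ0 lam * r ω' ^ lam
            = (r ω' / r ω) ^ lam * (μ0 lam * r ω ^ lam) := by
          rw [div_pow]
          field_simp
        rw [this]
        have hp : (0:ℝ) ≤ (r ω' / r ω) ^ lam := by
          have := hrpos ω'; have := hrpos ω; positivity
        nlinarith
      calc S lam ω' ≤ (lam : ℝ) * (μ0 lam * r ω' ^ lam) := h1
        _ ≤ (lam : ℝ) * (r ω' / r ω) ^ lam := by
            exact mul_le_mul_of_nonneg_left h2 (Nat.cast_nonneg lam)
    · -- μ0 lam ≤ (1/r ω)^lam
      have : μ0 lam = (1 / r ω) ^ lam * (μ0 lam * r ω ^ lam) := by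
        rw [one_div, inv_pow]
        field_simp
      rw [this]
      have hp : (0:ℝ) ≤ (1 / r ω) ^ lam := by positivity
      nlinarith
  -- g tends to 0
  have hgto : Tendsto g atTop (nhds 0) := by
    rw [hg]
    have h1 : Tendsto (fun lam : ℕ =>
        ∑ ω' ∈ Finset.univ.erase ω, (lam : ℝ) * (r ω' / r ω) ^ lam)
        atTop (nhds 0) := by
      have : (0:ℝ) = ∑ ω' ∈ Finset.univ.erase ω, (0:ℝ) := by simp
      rw [this]
      apply tendsto_finset_sum
      intro ω' hω'
      have hω'ne : ω' ≠ ω := Finset.ne_of_mem_erase hω'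
      apply tendsto_self_mul_const_pow_of_lt_one
      · have := hrpos ω'; have := hrpos ω; positivity
      · rw [div_lt_one (hrpos ω)]
        exact (hr ω' hω'ne).2
    have h2 : Tendsto (fun lam : ℕ => (1 / r ω) ^ lam) atTop (nhds 0) := by
      have hro := hrpos ω
      apply tendsto_pow_atTop_nhds_zero_of_lt_one
      · positivity
      · rw [div_lt_one hro]; exact hrω
    simpa using h1.add h2
  -- squeeze
  have hdiff : Tendsto (fun lam => 1 - S lam ω) atTop (nhds 0) := by
    apply squeeze_zero' (g := g)
    · filter_upwards [eventually_ge_atTop 1] with lam hlam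
      have := hSle1 lam hlam
      linarith
    · filter_upwards [eventually_ge_atTop 1] with lam hlam
      exact hbound lam hlam
    · exact hgto
  have : Tendsto (fun lam => 1 - (1 - S lam ω)) atTop (nhds (1 - 0)) :=
    tendsto_const_nhds.sub hdiff
  simpa using this
end

section
/- Spread bound for M-state automata: for an irreducible finite Markov automaton with M memory states driven by signals, if the likelihood ratio of any signal set between states ω and ω' is bounded: F^ω(S')/F^{ω'}(S') ∈ [1/L, L] for every signal event S' of positive measure, then the stationary distributions satisfy min_m (μ^ω_m/μ^{ω'}_m) ≥ L^{−2(M−1)} · max_m (μ^ω_m/μ^{ω'}_m). -/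
lemma cross_edge {α : Type*} (r : α → α → Prop) (A : Finset α) [DecidableEq α]
    {a b : α} (hab : Relation.ReflTransGen r a b) :
    a ∈ A → b ∉ A → ∃ x ∈ A, ∃ y, y ∉ A ∧ r x y := by
  induction hab with
  | refl => intro ha hb; exact absurd ha hb
  | @tail c d hac hcd ih =>
    intro ha hd
    by_cases hc : c ∈ A
    · exact ⟨c, hc, d, hd, hcd⟩
    · exact ih ha hc

theorem stmt8 (M : ℕ) (hM : 1 ≤ M) (L : ℝ) (hL : 1 ≤ L)
    (Q1 Q2 : Fin M → Fin M → ℝ)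
    (hQ1nn : ∀ m m', 0 ≤ Q1 m m') (hQ2nn : ∀ m m', 0 ≤ Q2 m m')
    (hrow1 : ∀ m, ∑ m', Q1 m m' = 1) (hrow2 : ∀ m, ∑ m', Q2 m m' = 1)
    (hsupp : ∀ m m', 0 < Q1 m m' ↔ 0 < Q2 m m')
    (hratio1 : ∀ m m', Q1 m m' ≤ L * Q2 m m')
    (hratio2 : ∀ m m', Q2 m m' ≤ L * Q1 m m')
    (hconn : ∀ m m', Relation.ReflTransGen (fun x y => 0 < Q1 x y) m m')
    (μ1 μ2 : Fin M → ℝ)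
    (hμ1pos : ∀ m, 0 < μ1 m) (hμ2pos : ∀ m, 0 < μ2 m)
    (hμ1sum : ∑ m, μ1 m = 1) (hμ2sum : ∑ m, μ2 m = 1)
    (hstat1 : ∀ m', ∑ m, μ1 m * Q1 m m' = μ1 m')
    (hstat2 : ∀ m', ∑ m, μ2 m * Q2 m m' = μ2 m') :
    ∀ m m', L ^ (-(2 * ((M : ℤ) - 1))) * (μ1 m' / μ2 m') ≤ μ1 m / μ2 m := by
  have hL0 : (0:ℝ) < L := lt_of_lt_of_le one_pos hL
  -- flow balance across any cut, for any stationary pair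
  have balance : ∀ (μ : Fin M → ℝ) (Q : Fin M → Fin M → ℝ), (∀ m : Fin M, ∑ m', Q m m' = 1) →
      (∀ m' : Fin M, ∑ m, μ m * Q m m' = μ m') → ∀ A : Finset (Fin M),
      ∑ m ∈ A, ∑ m' ∈ Aᶜ, μ m * Q m m' = ∑ m ∈ Aᶜ, ∑ m' ∈ A, μ m * Q m m' := by
    intro μ Q hrow hstat A
    have h1 : ∑ m ∈ A, μ m
        = (∑ m ∈ A, ∑ m' ∈ A, μ m * Q m m') + ∑ m ∈ A, ∑ m' ∈ Aᶜ, μ m * Q m m' := by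
      rw [← Finset.sum_add_distrib]
      refine Finset.sum_congr rfl fun m _ => ?_
      rw [Finset.sum_add_sum_compl, ← Finset.mul_sum, hrow, mul_one]
    have h2 : ∑ m' ∈ A, μ m'
        = (∑ m' ∈ A, ∑ m ∈ A, μ m * Q m m') + ∑ m' ∈ A, ∑ m ∈ Aᶜ, μ m * Q m m' := by
      rw [← Finset.sum_add_distrib]
      refine Finset.sum_congr rfl fun m' _ => ?_
      rw [Finset.sum_add_sum_compl, hstat]
    have hc1 : (∑ m ∈ A, ∑ m' ∈ A, μ m * Q m m')
        = ∑ m' ∈ A, ∑ m ∈ A, μ m * Q m m' := Finset.sum_comm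
    have hc2 : (∑ m' ∈ A, ∑ m ∈ Aᶜ, μ m * Q m m')
        = ∑ m ∈ Aᶜ, ∑ m' ∈ A, μ m * Q m m' := Finset.sum_comm
    rw [← hc2]
    linarith [h1, h2, hc1]
  -- key cut step
  have keystep : ∀ A : Finset (Fin M), A.Nonempty → Aᶜ.Nonempty → ∀ c : ℝ, 0 ≤ c →
      (∀ m ∈ A, c * μ2 m ≤ μ1 m) → ∃ y ∈ Aᶜ, c / L ^ 2 * μ2 y ≤ μ1 y := by
    intro A hA hAc c hc hmin
    obtain ⟨y, hy, hymax⟩ := Finset.exists_max_image Aᶜ (fun m => μ1 m / μ2 m) hAc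
    set b := μ1 y / μ2 y with hb
    have hb0 : 0 ≤ b := le_of_lt (div_pos (hμ1pos y) (hμ2pos y))
    refine ⟨y, hy, ?_⟩
    have hub : ∀ m ∈ Aᶜ, μ1 m ≤ b * μ2 m := by
      intro m hm
      have := hymax m hm
      rw [div_le_iff₀ (hμ2pos m)] at this
      linarith [this]
    -- positive μ2-flow across the cut
    obtain ⟨a0, ha0⟩ := hA
    obtain ⟨b0, hb0'⟩ := hAc
    have hb0A : b0 ∉ A := Finset.mem_compl.mp hb0'
    obtain ⟨x, hx, z, hz, hQxz⟩ := cross_edge _ A (hconn a0 b0) ha0 hb0A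
    have hzc : z ∈ Aᶜ := Finset.mem_compl.mpr hz
    set F2 := ∑ m ∈ A, ∑ m' ∈ Aᶜ, μ2 m * Q2 m m' with hF2
    have hF2pos : 0 < F2 := by
      have hterm : 0 < μ2 x * Q2 x z := mul_pos (hμ2pos x) ((hsupp x z).mp hQxz)
      have h1 : μ2 x * Q2 x z ≤ ∑ m' ∈ Aᶜ, μ2 x * Q2 x m' :=
        Finset.single_le_sum (fun i _ => mul_nonneg (le_of_lt (hμ2pos x)) (hQ2nn x i)) hzc
      have h2 : (∑ m' ∈ Aᶜ, μ2 x * Q2 x m') ≤ F2 :=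
        Finset.single_le_sum (fun i _ => Finset.sum_nonneg fun j _ =>
          mul_nonneg (le_of_lt (hμ2pos i)) (hQ2nn i j)) hx
      linarith
    -- chain of inequalities
    have step1 : c * F2 ≤ L * ∑ m ∈ A, ∑ m' ∈ Aᶜ, μ1 m * Q1 m m' := by
      have : ∑ m ∈ A, ∑ m' ∈ Aᶜ, c * (μ2 m * Q2 m m')
          ≤ ∑ m ∈ A, ∑ m' ∈ Aᶜ, L * (μ1 m * Q1 m m') := by
        refine Finset.sum_le_sum fun m hm => Finset.sum_le_sum fun m' _ => ?_
        have h1 : c * μ2 m ≤ μ1 m := hmin m hm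
        have h2 : Q2 m m' ≤ L * Q1 m m' := hratio2 m m'
        calc c * (μ2 m * Q2 m m') = (c * μ2 m) * Q2 m m' := by ring
          _ ≤ μ1 m * (L * Q1 m m') :=
            mul_le_mul h1 h2 (hQ2nn m m') (le_of_lt (hμ1pos m))
          _ = L * (μ1 m * Q1 m m') := by ring
      simpa [Finset.mul_sum, hF2] using this
    have step3 : (∑ m ∈ Aᶜ, ∑ m' ∈ A, μ1 m * Q1 m m')
        ≤ L * b * ∑ m ∈ Aᶜ, ∑ m' ∈ A, μ2 m * Q2 m m' := by
      have : ∑ m ∈ Aᶜ, ∑ m' ∈ A, μ1 m * Q1 m m'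
          ≤ ∑ m ∈ Aᶜ, ∑ m' ∈ A, L * b * (μ2 m * Q2 m m') := by
        refine Finset.sum_le_sum fun m hm => Finset.sum_le_sum fun m' _ => ?_
        have h1 : μ1 m ≤ b * μ2 m := hub m hm
        have h2 : Q1 m m' ≤ L * Q2 m m' := hratio1 m m'
        calc μ1 m * Q1 m m' ≤ (b * μ2 m) * (L * Q2 m m') :=
              mul_le_mul h1 h2 (hQ1nn m m')
                (mul_nonneg hb0 (le_of_lt (hμ2pos m)))
          _ = L * b * (μ2 m * Q2 m m') := by ring
      simpa [Finset.mul_sum] using this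
    have bal1 := balance μ1 Q1 hrow1 hstat1 A
    have bal2 := balance μ2 Q2 hrow2 hstat2 A
    have hcb : c ≤ L ^ 2 * b := by
      have hchain : c * F2 ≤ L ^ 2 * b * F2 := by
        calc c * F2 ≤ L * ∑ m ∈ A, ∑ m' ∈ Aᶜ, μ1 m * Q1 m m' := step1
          _ = L * ∑ m ∈ Aᶜ, ∑ m' ∈ A, μ1 m * Q1 m m' := by rw [bal1]
          _ ≤ L * (L * b * ∑ m ∈ Aᶜ, ∑ m' ∈ A, μ2 m * Q2 m m') := by
              exact mul_le_mul_of_nonneg_left step3 (le_of_lt hL0)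
          _ = L ^ 2 * b * F2 := by rw [hF2, bal2]; ring
      exact le_of_mul_le_mul_right hchain hF2pos
    have hL2 : (0:ℝ) < L ^ 2 := pow_pos hL0 2
    have : c / L ^ 2 ≤ b := (div_le_iff₀ hL2).mpr (by linarith [hcb])
    calc c / L ^ 2 * μ2 y ≤ b * μ2 y :=
          mul_le_mul_of_nonneg_right this (le_of_lt (hμ2pos y))
      _ = μ1 y := div_mul_cancel₀ _ (ne_of_gt (hμ2pos y))
  -- induction on the size of the complement
  have main : ∀ n (A : Finset (Fin M)), Aᶜ.card = n → A.Nonempty → ∀ c : ℝ, 0 ≤ c →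
      (∀ m ∈ A, c * μ2 m ≤ μ1 m) → ∀ m, c / L ^ (2 * n) * μ2 m ≤ μ1 m := by
    intro n
    induction n with
    | zero =>
      intro A hcard _ c hc hmin m
      have hA : A = Finset.univ := by
        have := Finset.card_eq_zero.mp hcard
        simpa [Finset.compl_eq_empty_iff] using this
      simpa using hmin m (by simp [hA])
    | succ n ih =>
      intro A hcard hA c hc hmin m
      have hAc : Aᶜ.Nonempty := Finset.card_pos.mp (by omega)
      obtain ⟨y, hy, hyineq⟩ := keystep A hA hAc c hc hmin
      have hyA : y ∉ A := Finset.mem_compl.mp hy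
      have hcard' : (insert y A)ᶜ.card = n := by
        rw [Finset.card_compl, Finset.card_insert_of_notMem hyA]
        rw [Finset.card_compl] at hcard
        omega
      have hmin' : ∀ m' ∈ insert y A, c / L ^ 2 * μ2 m' ≤ μ1 m' := by
        intro m' hm'
        rcases Finset.mem_insert.mp hm' with h | h
        · rw [h]; exact hyineq
        · have h1 := hmin m' h
          have : c / L ^ 2 ≤ c := by
            apply div_le_self hc
            exact one_le_pow₀ hL
          nlinarith [hμ2pos m', this, h1]
      have := ih (insert y A) hcard' ⟨y, Finset.mem_insert_self y A⟩ (c / L ^ 2)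
        (div_nonneg hc (le_of_lt (pow_pos hL0 2))) hmin' m
      have hexp : c / L ^ 2 / L ^ (2 * n) = c / L ^ (2 * (n + 1)) := by
        rw [div_div, ← pow_add]
        ring_nf
      rwa [hexp] at this
  intro m m'
  have hcard : ({m'} : Finset (Fin M))ᶜ.card = M - 1 := by
    rw [Finset.card_compl]
    simp
  have h0 : 0 ≤ μ1 m' / μ2 m' := le_of_lt (div_pos (hμ1pos m') (hμ2pos m'))
  have hmin : ∀ x ∈ ({m'} : Finset (Fin M)), (μ1 m' / μ2 m') * μ2 x ≤ μ1 x := by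
    intro x hx
    rw [Finset.mem_singleton] at hx
    subst hx
    rw [div_mul_cancel₀ _ (ne_of_gt (hμ2pos x))]
  have hres := main (M - 1) ({m'} : Finset (Fin M)) hcard ⟨m', Finset.mem_singleton_self m'⟩
    (μ1 m' / μ2 m') h0 hmin m
  have hexp : L ^ (-(2 * ((M : ℤ) - 1))) = (L ^ (2 * (M - 1)))⁻¹ := by
    rw [zpow_neg]
    congr 1
    have : (2 * ((M : ℤ) - 1)) = ((2 * (M - 1) : ℕ) : ℤ) := by
      push_cast [Nat.cast_sub hM]
      ring
    rw [this, zpow_natCast]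
  rw [hexp, le_div_iff₀ (hμ2pos m)]
  calc (L ^ (2 * (M - 1)))⁻¹ * (μ1 m' / μ2 m') * μ2 m
      = (μ1 m' / μ2 m') / L ^ (2 * (M - 1)) * μ2 m := by ring
    _ ≤ μ1 m := hres
end

section
/- Mistake lower bound in big worlds: suppose μ^ω, μ^{ω'} are stationary distributions over M memory states with the spread bound (max_{m∈A} μ^ω_m/μ^{ω'}_m)/(min_{m∈B} μ^ω_m/μ^{ω'}_m) ≤ C, where A, B partition a subset of states. If Σ_{m∈A} μ^ω_m = 1−ε and Σ_{m∈A} μ^{ω'}_m = ε′ with ε, ε′ > 0, then max_{m∈B} μ^{ω'}_m ≤ C·ε·ε′/(1−ε), and hence Σ_{m∈B} μ^{ω'}_m ≤ M·C·ε·ε′/(1−ε). Consequently if ε, ε′ are small enough that M·C·ε·ε′/(1−ε) < 1, then the probability of the correct action in state ω′ is bounded away from 1. -/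
theorem stmt9 (M : ℕ) (C ε ε' : ℝ) (hC : 0 < C)
    (hε : 0 < ε) (hε1 : ε < 1) (hε' : 0 < ε')
    (μ1 μ2 : Fin M → ℝ)
    (hμ1pos : ∀ m, 0 < μ1 m) (hμ2pos : ∀ m, 0 < μ2 m)
    (hμ1sum : ∑ m, μ1 m = 1) (hμ2sum : ∑ m, μ2 m = 1)
    (A B : Finset (Fin M)) (hAB : Disjoint A B)
    (hA1 : ∑ m ∈ A, μ1 m = 1 - ε) (hA2 : ∑ m ∈ A, μ2 m = ε')
    (hB1 : ∑ m ∈ B, μ1 m ≤ ε)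
    (hspread : ∀ m ∈ A, ∀ n ∈ B, μ1 m / μ2 m ≤ C * (μ1 n / μ2 n)) :
    (∀ n ∈ B, μ2 n ≤ C * ε * ε' / (1 - ε)) ∧
      ∑ n ∈ B, μ2 n ≤ M * C * ε * ε' / (1 - ε) := by
  have h1ε : 0 < 1 - ε := by linarith
  have key : ∀ n ∈ B, μ2 n ≤ C * ε * ε' / (1 - ε) := by
    intro n hn
    have hεn : μ1 n ≤ ε :=
      le_trans (Finset.single_le_sum (fun m _ => (hμ1pos m).le) hn) hB1
    have hstep : ∀ m ∈ A, μ2 n * μ1 m ≤ C * μ1 n * μ2 m := by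
      intro m hm
      have h' : μ1 m / μ2 m ≤ (C * μ1 n) / μ2 n := by
        rw [mul_div_assoc]; exact hspread m hm n hn
      have := (div_le_div_iff₀ (hμ2pos m) (hμ2pos n)).mp h'
      nlinarith
    have hsum : μ2 n * (1 - ε) ≤ C * μ1 n * ε' := by
      calc μ2 n * (1 - ε) = ∑ m ∈ A, μ2 n * μ1 m := by
            rw [← Finset.mul_sum, hA1]
        _ ≤ ∑ m ∈ A, C * μ1 n * μ2 m := Finset.sum_le_sum hstep
        _ = C * μ1 n * ε' := by rw [← Finset.mul_sum, hA2]
    rw [le_div_iff₀ h1ε]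
    nlinarith [mul_le_mul_of_nonneg_right (mul_le_mul_of_nonneg_left hεn hC.le) hε'.le]
  refine ⟨key, ?_⟩
  have hbnn : 0 ≤ C * ε * ε' / (1 - ε) := by positivity
  calc ∑ n ∈ B, μ2 n ≤ ∑ _n ∈ B, C * ε * ε' / (1 - ε) :=
        Finset.sum_le_sum key
    _ = B.card * (C * ε * ε' / (1 - ε)) := by
        rw [Finset.sum_const, nsmul_eq_mul]
    _ ≤ M * (C * ε * ε' / (1 - ε)) := by
        apply mul_le_mul_of_nonneg_right _ hbnn
        exact_mod_cast le_trans (Finset.card_le_univ B) (le_of_eq (Finset.card_univ.trans (Fintype.card_fin M)))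
    _ = M * C * ε * ε' / (1 - ε) := by ring
end

section
/- Optimality of ignorance under low prior: if for all memory states m one has u^{ω'} p^{ω'} μ^{ω'}_m ≥ (1+A)·u^ω p^ω μ^ω_m for some fixed ω' ≠ ω and A > 0, then replacing the action at any memory state m from ω to ω' weakly decreases asymptotic utility loss by u^{ω'}p^{ω'}μ^{ω'}_m − u^ω p^ω μ^ω_m ≥ A·u^ω p^ω μ^ω_m ≥ 0; hence in any ε-optimal mechanism, Σ_{m∈M^ω} u^ω p^ω μ^ω_m ≤ ε/A. -/
theorem stmt10 (N M : ℕ) (hN : 0 < N) (hM : 0 < M)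
    (μ : Fin N → Fin M → ℝ) (u p : Fin N → ℝ)
    (hμpos : ∀ ω m, 0 < μ ω m) (hμsum : ∀ ω, ∑ m, μ ω m = 1)
    (hu : ∀ ω, 0 < u ω) (hp : ∀ ω, 0 < p ω)
    (Lf : (Fin M → Fin N) → ℝ)
    (hLf : ∀ d, Lf d = ∑ ω, u ω * p ω *
      (1 - ∑ m ∈ Finset.univ.filter (fun m => d m = ω), μ ω m))
    (ω ω' : Fin N) (hωω' : ω' ≠ ω) (A : ℝ) (hA : 0 < A)
    (hdom : ∀ m, (1 + A) * (u ω * p ω * μ ω m) ≤ u ω' * p ω' * μ ω' m)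
    (ε : ℝ) (hε : 0 ≤ ε) (d : Fin M → Fin N)
    (hopt : Lf d ≤ (⨅ d' : Fin M → Fin N, Lf d') + ε) :
    ∑ m ∈ Finset.univ.filter (fun m => d m = ω), u ω * p ω * μ ω m ≤ ε / A := by
  haveI : NeZero N := ⟨hN.ne'⟩
  -- rewrite the loss as a sum over memory states
  have key : ∀ d0 : Fin M → Fin N, Lf d0 = (∑ ψ, u ψ * p ψ)
      - ∑ m, u (d0 m) * p (d0 m) * μ (d0 m) m := by
    intro d0
    rw [hLf d0]
    have h1 : ∀ ψ : Fin N, u ψ * p ψ *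
        (1 - ∑ m ∈ Finset.univ.filter (fun m => d0 m = ψ), μ ψ m)
        = u ψ * p ψ - ∑ m ∈ Finset.univ.filter (fun m => d0 m = ψ),
            u (d0 m) * p (d0 m) * μ (d0 m) m := by
      intro ψ
      rw [mul_sub, mul_one, Finset.mul_sum]
      congr 1
      refine Finset.sum_congr rfl fun m hm => ?_
      simp only [Finset.mem_filter] at hm
      rw [hm.2]
    simp_rw [h1, Finset.sum_sub_distrib]
    congr 1
    exact Finset.sum_fiberwise Finset.univ d0 (fun m => u (d0 m) * p (d0 m) * μ (d0 m) m)
  set d' : Fin M → Fin N := fun m => if d m = ω then ω' else d m with hd'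
  have hdiff : A * ∑ m ∈ Finset.univ.filter (fun m => d m = ω), u ω * p ω * μ ω m
      ≤ Lf d - Lf d' := by
    rw [key d, key d']
    have : Lf d - Lf d' = Lf d - Lf d' := rfl
    have h2 : ((∑ ψ, u ψ * p ψ) - ∑ m, u (d m) * p (d m) * μ (d m) m)
        - ((∑ ψ, u ψ * p ψ) - ∑ m, u (d' m) * p (d' m) * μ (d' m) m)
        = ∑ m, (u (d' m) * p (d' m) * μ (d' m) m - u (d m) * p (d m) * μ (d m) m) := by
      rw [Finset.sum_sub_distrib]; ring
    rw [h2, Finset.mul_sum]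
    rw [← Finset.sum_filter_add_sum_filter_not Finset.univ (fun m => d m = ω)
      (fun m => u (d' m) * p (d' m) * μ (d' m) m - u (d m) * p (d m) * μ (d m) m)]
    have h3 : ∑ m ∈ Finset.univ.filter (fun m => ¬ d m = ω),
        (u (d' m) * p (d' m) * μ (d' m) m - u (d m) * p (d m) * μ (d m) m) = 0 := by
      refine Finset.sum_eq_zero fun m hm => ?_
      simp only [Finset.mem_filter] at hm
      simp [hd', hm.2]
    rw [h3, add_zero]
    refine Finset.sum_le_sum fun m hm => ?_
    simp only [Finset.mem_filter] at hm
    simp only [hd', hm.2, if_pos]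
    have := hdom m
    nlinarith [hμpos ω m, (hu ω), (hp ω)]
  have hinf : (⨅ d0 : Fin M → Fin N, Lf d0) ≤ Lf d' := by
    refine ciInf_le ?_ d'
    exact (Set.finite_range Lf).bddBelow
  have hεA : A * ∑ m ∈ Finset.univ.filter (fun m => d m = ω), u ω * p ω * μ ω m ≤ ε := by
    linarith
  rw [le_div_iff₀ hA]
  linarith
end

section
/- Ignorance beats full consideration for large N in the symmetric environment: for 𝓘 > 1 and N ≥ 4 even, the ignorant automaton's asymptotic utility 𝓘²(N + 2𝓘 − 4)/(2𝓘²(N + 2𝓘 − 4) + (N − 2)²) exceeds the non-ignorant automaton's utility 𝓘/(N + 𝓘 − 1) if and only if (N + (𝓘 − 4)/2)² > (4 + 𝓘(2𝓘 − 4)(𝓘 + 1))/(𝓘 − 1) + (𝓘 − 4)²/4; in particular, for every 𝓘 > 1 there exists N̄ such that the ignorant automaton is strictly better for all even N ≥ N̄. -/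
theorem stmt16 (I : ℝ) (hI : 1 < I) :
    (∀ N : ℕ, 4 ≤ N → Even N →
      (I / ((N : ℝ) + I - 1) <
          I ^ 2 * ((N : ℝ) + 2 * I - 4) /
            (2 * I ^ 2 * ((N : ℝ) + 2 * I - 4) + ((N : ℝ) - 2) ^ 2) ↔
        (4 + I * (2 * I - 4) * (I + 1)) / (I - 1) + (I - 4) ^ 2 / 4 <
          ((N : ℝ) + (I - 4) / 2) ^ 2)) ∧
    ∃ Nbar : ℕ, ∀ N : ℕ, Nbar ≤ N → 4 ≤ N → Even N →
      I / ((N : ℝ) + I - 1) <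
        I ^ 2 * ((N : ℝ) + 2 * I - 4) /
          (2 * I ^ 2 * ((N : ℝ) + 2 * I - 4) + ((N : ℝ) - 2) ^ 2) := by
  have hI0 : (0:ℝ) < I := by linarith
  have hI1 : (0:ℝ) < I - 1 := by linarith
  have key : ∀ N : ℕ, 4 ≤ N → Even N →
      (I / ((N : ℝ) + I - 1) <
          I ^ 2 * ((N : ℝ) + 2 * I - 4) /
            (2 * I ^ 2 * ((N : ℝ) + 2 * I - 4) + ((N : ℝ) - 2) ^ 2) ↔
        (4 + I * (2 * I - 4) * (I + 1)) / (I - 1) + (I - 4) ^ 2 / 4 <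
          ((N : ℝ) + (I - 4) / 2) ^ 2) := by
    intro N hN _
    have hN4 : (4:ℝ) ≤ (N:ℝ) := by exact_mod_cast hN
    have h1 : (0:ℝ) < (N:ℝ) + I - 1 := by linarith
    have h2 : (0:ℝ) < 2 * I ^ 2 * ((N : ℝ) + 2 * I - 4) + ((N : ℝ) - 2) ^ 2 := by
      nlinarith [sq_nonneg ((N:ℝ) - 2), sq_nonneg I]
    rw [div_lt_div_iff₀ h1 h2, div_add_div _ _ (ne_of_gt hI1) (by norm_num : (4:ℝ) ≠ 0),
      div_lt_iff₀ (by positivity : (0:ℝ) < (I-1)*4)]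
    constructor
    · intro h
      nlinarith [h, hI0, hI1]
    · intro h
      nlinarith [h, hI0, hI1, mul_pos hI0 hI1]
  constructor
  · exact key
  · set X := (4 + I * (2 * I - 4) * (I + 1)) / (I - 1) + (I - 4) ^ 2 / 4 with hX
    refine ⟨⌈Real.sqrt (max X 0) - (I - 4) / 2⌉₊ + 1, fun N hN hN4 hEv => ?_⟩
    rw [key N hN4 hEv]
    have hs : (0:ℝ) ≤ Real.sqrt (max X 0) := Real.sqrt_nonneg _
    have hNc : Real.sqrt (max X 0) - (I - 4) / 2 < (N : ℝ) := by
      have : (⌈Real.sqrt (max X 0) - (I - 4) / 2⌉₊ : ℝ) + 1 ≤ (N : ℝ) := by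
        exact_mod_cast hN
      have := Nat.le_ceil (Real.sqrt (max X 0) - (I - 4) / 2)
      linarith
    have h1 : Real.sqrt (max X 0) < (N:ℝ) + (I - 4) / 2 := by linarith
    have h2 : max X 0 < ((N:ℝ) + (I - 4) / 2) ^ 2 := by
      calc max X 0 = Real.sqrt (max X 0) ^ 2 := (Real.sq_sqrt (le_max_right _ _)).symm
        _ < ((N:ℝ) + (I - 4) / 2) ^ 2 := by nlinarith
    exact lt_of_le_of_lt (le_max_left _ _) h2
end
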